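/- arXiv:2605.00625 — 2 statements merged into one kernel-verified Lean document; each statement's English description precedes it below -/
import Mathlib

section
/- Let n and λ be powers of 2 with λ ≤ n, and let k ≥ 1 corrupted users be distributed among the λ-sized bottom groups. In the binary tree over the n/λ groups (with L' = log₂(n/λ) + 1 levels), the number of level-r nodes whose subtree contains at least one corrupted user is at most min(k, n/(λ·2^{r−1})). Consequently, Σ_{r=1}^{L'} (number of corrupted nodes at level r) ≤ k·(L' − ⌈log₂ k⌉) + Σ_{j=0}^{⌈log₂ k⌉} min(k, 2^j) ≤ k·L' + 2k. -/
lemma sum_min_le_aux (k m L : ℕ) (hm : k ≤ 2 ^ m) :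
    ∑ j ∈ Finset.range L, min k (2 ^ j) ≤
      k * (L - m) + ∑ j ∈ Finset.range (m + 1), min k (2 ^ j) := by
  rcases le_or_gt L (m + 1) with h | h
  · calc ∑ j ∈ Finset.range L, min k (2 ^ j)
        ≤ ∑ j ∈ Finset.range (m + 1), min k (2 ^ j) := by
          apply Finset.sum_le_sum_of_subset (Finset.range_subset_range.2 h)
      _ ≤ _ := Nat.le_add_left _ _
  · rw [Finset.range_eq_Ico, ← Finset.sum_Ico_consecutive _ (Nat.zero_le (m+1)) h.le]
    rw [add_comm (k * (L - m))]
    refine add_le_add (le_of_eq (by rw [Finset.range_eq_Ico])) ?_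
    calc ∑ j ∈ Finset.Ico (m+1) L, min k (2 ^ j)
        ≤ ∑ j ∈ Finset.Ico (m+1) L, k :=
          Finset.sum_le_sum fun i _ => min_le_left k (2 ^ i)
      _ = (L - (m+1)) * k := by rw [Finset.sum_const, Nat.card_Ico, smul_eq_mul]
      _ ≤ k * (L - m) := by rw [mul_comm]; gcongr; omega

/-- Counting corrupted nodes in the OHSDP binary tree: `n` and `λ` are powers
of two with `λ ≤ n`, the `n/λ` bottom groups contain at most `k` corrupted
groups `C`, and a level-`r` node `j` covers the bottom groups `g` with
`g / 2^(r-1) = j`. Then the number of corrupted level-`r` nodes is at most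
`min(k, (n/λ)/2^(r-1))`, and the total over all `L' = log₂(n/λ)+1` levels is
at most `k·(L' − ⌈log₂ k⌉) + Σ_{j=0}^{⌈log₂ k⌉} min(k, 2^j) ≤ k·L' + 2k`. -/
theorem corrupted_node_count (N l : ℕ) (hl : l ≤ N)
    (n lam : ℕ) (hn : n = 2 ^ N) (hlam : lam = 2 ^ l)
    (k : ℕ) (hk : 1 ≤ k)
    (C : Finset ℕ) (hC : ∀ g ∈ C, g < n / lam) (hCcard : C.card ≤ k)
    (L' : ℕ) (hL' : L' = (N - l) + 1) :
    (∀ r ∈ Finset.Icc 1 L',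
      (C.image (fun g => g / 2 ^ (r - 1))).card ≤ min k ((n / lam) / 2 ^ (r - 1))) ∧
    (∑ r ∈ Finset.Icc 1 L', (C.image (fun g => g / 2 ^ (r - 1))).card ≤
      k * (L' - Nat.clog 2 k) +
        ∑ j ∈ Finset.range (Nat.clog 2 k + 1), min k (2 ^ j)) ∧
    (k * (L' - Nat.clog 2 k) +
        ∑ j ∈ Finset.range (Nat.clog 2 k + 1), min k (2 ^ j) ≤
      k * L' + 2 * k) := by
  have hnl : n / lam = 2 ^ (N - l) := by
    rw [hn, hlam, Nat.pow_div hl (by norm_num)]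
  have key : ∀ r ∈ Finset.Icc 1 L',
      (C.image (fun g => g / 2 ^ (r - 1))).card ≤ min k ((n / lam) / 2 ^ (r - 1)) := by
    intro r hr
    rw [Finset.mem_Icc] at hr
    refine le_min ((Finset.card_image_le).trans hCcard) ?_
    have hsub : C.image (fun g => g / 2 ^ (r - 1)) ⊆
        Finset.range ((n / lam) / 2 ^ (r - 1)) := by
      intro x hx
      rw [Finset.mem_image] at hx
      obtain ⟨g, hg, rfl⟩ := hx
      rw [Finset.mem_range, Nat.div_lt_iff_lt_mul (pow_pos (by norm_num : (0:ℕ) < 2) _),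
        hnl]
      have hrl : r - 1 ≤ N - l := by omega
      rw [Nat.pow_div hrl (by norm_num), ← pow_add]
      have heq : N - l - (r - 1) + (r - 1) = N - l := by omega
      rw [heq, ← hnl]; exact hC g hg
    exact (Finset.card_le_card hsub).trans (by simp)
  refine ⟨key, ?_, ?_⟩
  · set m := Nat.clog 2 k with hm
    have hkm : k ≤ 2 ^ m := Nat.le_pow_clog (by norm_num) k
    calc ∑ r ∈ Finset.Icc 1 L', (C.image (fun g => g / 2 ^ (r - 1))).card
        ≤ ∑ r ∈ Finset.Icc 1 L', min k (2 ^ (L' - r)) := by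
          apply Finset.sum_le_sum
          intro r hr
          refine (key r hr).trans ?_
          rw [Finset.mem_Icc] at hr
          have hrl : r - 1 ≤ N - l := by omega
          rw [hnl, Nat.pow_div hrl (by norm_num)]
          have : N - l - (r - 1) = L' - r := by omega
          rw [this]
      _ = ∑ i ∈ Finset.range L', min k (2 ^ (L' - (1 + i))) := by
          rw [show Finset.Icc 1 L' = Finset.Ico 1 (L' + 1) by rfl,
            Finset.sum_Ico_eq_sum_range]
          simp
      _ = ∑ j ∈ Finset.range L', min k (2 ^ j) := by
          rw [← Finset.sum_range_reflect]
          apply Finset.sum_congr rfl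
          intro i hi
          rw [Finset.mem_range] at hi
          congr 2
          omega
      _ ≤ _ := sum_min_le_aux k m L' hkm
  · set m := Nat.clog 2 k with hm
    have hL1 : 1 ≤ L' := by omega
    rcases eq_or_lt_of_le hk with h1 | h2
    · have : m = 0 := by rw [hm, ← h1]; simp
      rw [this]; simp; omega
    · have hm1 : 1 ≤ m := by
        rw [hm]; exact Nat.clog_pos (by norm_num) h2
      have hlt : 2 ^ (m - 1) < k := by
        have := Nat.pow_pred_clog_lt_self (b := 2) (by norm_num) h2
        rwa [← hm, Nat.pred_eq_sub_one] at this
      have hsum : ∑ j ∈ Finset.range (m + 1), min k (2 ^ j) ≤ 3 * k - 1 := by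
        calc ∑ j ∈ Finset.range (m + 1), min k (2 ^ j)
            = (∑ j ∈ Finset.range m, min k (2 ^ j)) + min k (2 ^ m) :=
              Finset.sum_range_succ _ _
          _ ≤ (∑ j ∈ Finset.range m, 2 ^ j) + k := by
              refine add_le_add (Finset.sum_le_sum fun i _ => min_le_right k (2 ^ i))
                (min_le_left _ _)
          _ = 2 ^ m - 1 + k := by rw [Nat.geomSum_eq (le_refl 2)] <;> simp
          _ ≤ 3 * k - 1 := by
              have : 2 ^ m ≤ 2 * k := by
                have : 2 ^ m = 2 * 2 ^ (m - 1) := by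
                  rw [← pow_succ']; congr 1; omega
                omega
              omega
      have h1 : k * (L' - m) ≤ k * (L' - 1) := Nat.mul_le_mul_left k (by omega)
      calc k * (L' - m) + ∑ j ∈ Finset.range (m + 1), min k (2 ^ j)
          ≤ k * (L' - 1) + (3 * k - 1) := add_le_add h1 hsum
        _ ≤ k * L' + 2 * k := by
            have hLe : L' - 1 + 1 = L' := by omega
            have : k * (L' - 1) + k = k * L' := by
              conv_rhs => rw [← hLe]
              ring
            omega
end

section
/- Multi-attacker accumulation bound: let θ⁽¹⁾,…,θ^{(L)} ≥ 0, θ^{(L+1)} ≥ 0, γ ≥ 0, k ≥ 1. Suppose at level ℓ = L + 1 − ⌈log₂ k⌉ there are k groups each with error at most B_ℓ = 4Σ_{i=1}^{ℓ−1}θ^{(i)} + θ^{(ℓ)} + γ, all other level-ℓ groups have error at most θ^{(ℓ)}, and merging two level-r groups into a level-(r+1) group adds at most 2θ^{(r)} + θ^{(r+1)} to the sum of their errors. Then the root error is at most 4k·Σ_{i=1}^{L}θ^{(i)} + θ^{(L+1)} + k·γ. -/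
/-- Multi-attacker error accumulation (Theorem 4.4, OHSDP with `k` corrupted
users): at level `ℓ = L + 1 − ⌈log₂ k⌉`, `k` designated groups have error at
most `B_ℓ = 4Σ_{i<ℓ}θ⁽ⁱ⁾ + θ⁽ℓ⁾ + γ` and all other level-`ℓ` groups have error
at most `θ⁽ℓ⁾`; merging two level-`r` groups adds at most `2θ⁽ʳ⁾ + θ⁽ʳ⁺¹⁾`.
Then the root error is at most `4k·Σ_{i=1}^{L}θ⁽ⁱ⁾ + θ⁽ᴸ⁺¹⁾ + k·γ`. -/
theorem multi_attacker_accumulation (L k : ℕ) (hk : 1 ≤ k)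
    (hkL : Nat.clog 2 k ≤ L)
    (θ : ℕ → ℝ) (hθ : ∀ r, 0 ≤ θ r) (γ : ℝ) (hγ : 0 ≤ γ)
    (E : ℕ → ℕ → ℝ)
    (S : Finset ℕ) (hScard : S.card = k)
    (hSsub : ∀ v ∈ S, v < 2 ^ (L + 1 - (L + 1 - Nat.clog 2 k)))
    (hdesig : ∀ v ∈ S,
      E (L + 1 - Nat.clog 2 k) v ≤
        4 * (∑ i ∈ Finset.Icc 1 (L + 1 - Nat.clog 2 k - 1), θ i) +
          θ (L + 1 - Nat.clog 2 k) + γ)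
    (hhonest : ∀ v < 2 ^ (L + 1 - (L + 1 - Nat.clog 2 k)), v ∉ S →
      E (L + 1 - Nat.clog 2 k) v ≤ θ (L + 1 - Nat.clog 2 k))
    (hmerge : ∀ r, L + 1 - Nat.clog 2 k ≤ r → r ≤ L → ∀ v < 2 ^ (L - r),
      E (r + 1) v ≤ E r (2 * v) + E r (2 * v + 1) + 2 * θ r + θ (r + 1)) :
    E (L + 1) 0 ≤ 4 * k * (∑ i ∈ Finset.Icc 1 L, θ i) + θ (L + 1) + k * γ := by
  set c := Nat.clog 2 k with hc
  set l := L + 1 - c with hl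
  have hcl : L + 1 - l = c := by omega
  have h1l : 1 ≤ l := by omega
  rw [hcl] at hSsub hhonest
  set C : ℝ := 4 * (∑ i ∈ Finset.Icc 1 (l - 1), θ i) + γ with hC
  have hC0 : 0 ≤ C := by
    have : (0:ℝ) ≤ ∑ i ∈ Finset.Icc 1 (l - 1), θ i :=
      Finset.sum_nonneg fun i _ => hθ i
    positivity
  have key : ∀ t, t ≤ c → ∀ v, v < 2 ^ (c - t) →
      E (l + t) v ≤ ((S.filter (fun u => u / 2 ^ t = v)).card : ℝ) * C
        + (2 ^ (t + 1) * ∑ j ∈ Finset.range t, θ (l + j) + θ (l + t)) := by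
    intro t
    induction t with
    | zero =>
      intro _ v hv
      simp only [pow_zero, Nat.div_one, Nat.add_zero, Finset.range_zero,
        Finset.sum_empty, mul_zero, zero_add, Nat.sub_zero] at *
      by_cases hvS : v ∈ S
      · have hcard : v ∈ S.filter (fun u => u = v) := by
          simp [hvS]
        have h1 : (1:ℝ) ≤ ((S.filter (fun u => u = v)).card : ℝ) := by
          exact_mod_cast Finset.card_pos.mpr ⟨v, hcard⟩
        have hmulC : C ≤ ((S.filter (fun u => u = v)).card : ℝ) * C :=
          le_mul_of_one_le_left hC0 h1
        have hCdef : C = 4 * (∑ i ∈ Finset.Icc 1 (l - 1), θ i) + γ := rfl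
        have := hdesig v hvS
        linarith
      · have := hhonest v hv hvS
        have hfe : S.filter (fun u => u = v) = ∅ := by
          apply Finset.filter_eq_empty_iff.mpr
          intro u hu h; exact hvS (h ▸ hu)
        rw [hfe]
        simp
        linarith
    | succ t ih =>
      intro ht v hv
      have htc : t < c := by omega
      have hexp : c - t = (c - (t + 1)) + 1 := by omega
      have h2v : 2 * v < 2 ^ (c - t) := by
        rw [hexp, pow_succ]; omega
      have h2v1 : 2 * v + 1 < 2 ^ (c - t) := by
        rw [hexp, pow_succ]; omega
      have hLlt : L - (l + t) = c - (t + 1) := by omega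
      have hm := hmerge (l + t) (by omega) (by omega) v (by rw [hLlt]; exact hv)
      have ih1 := ih (by omega) (2 * v) h2v
      have ih2 := ih (by omega) (2 * v + 1) h2v1
      have hdiv : ∀ u : ℕ, u / 2 ^ (t + 1) = v ↔
          (u / 2 ^ t = 2 * v ∨ u / 2 ^ t = 2 * v + 1) := by
        intro u
        rw [pow_succ, ← Nat.div_div_eq_div_mul]
        omega
      have hcard : (S.filter (fun u => u / 2 ^ (t + 1) = v)).card
          = (S.filter (fun u => u / 2 ^ t = 2 * v)).card
            + (S.filter (fun u => u / 2 ^ t = 2 * v + 1)).card := by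
        rw [← Finset.card_union_of_disjoint]
        · congr 1
          rw [← Finset.filter_or]
          apply Finset.filter_congr
          intro u _
          simp [hdiv u]
        · rw [Finset.disjoint_filter]
          intro u _ h1 h2
          omega
      have hsum : ∑ j ∈ Finset.range (t + 1), θ (l + j)
          = (∑ j ∈ Finset.range t, θ (l + j)) + θ (l + t) :=
        Finset.sum_range_succ _ _
      have hla : l + (t + 1) = (l + t) + 1 := by omega
      rw [hla, hcard, hsum]
      push_cast
      have hS0 : (0:ℝ) ≤ ∑ j ∈ Finset.range t, θ (l + j) :=
        Finset.sum_nonneg fun j _ => hθ _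
      have e2 : (2:ℝ) ^ (t + 1 + 1) * ((∑ j ∈ Finset.range t, θ (l + j)) + θ (l + t))
          = 2 * ((2:ℝ) ^ (t + 1) * ∑ j ∈ Finset.range t, θ (l + j))
            + 2 ^ (t + 1 + 1) * θ (l + t) := by ring
      have h4 : (4:ℝ) ≤ 2 ^ (t + 1 + 1) := by
        calc (4:ℝ) = 2 ^ 2 := by norm_num
        _ ≤ 2 ^ (t + 1 + 1) := by
          apply pow_le_pow_right₀ (by norm_num); omega
      have h4θ : 4 * θ (l + t) ≤ 2 ^ (t + 1 + 1) * θ (l + t) :=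
        by nlinarith [hθ (l + t), h4]
      linarith [hm, ih1, ih2, e2, h4θ]
  -- root
  have hfS : S.filter (fun u => u / 2 ^ c = 0) = S := by
    apply Finset.filter_true_of_mem
    intro u hu
    exact Nat.div_eq_of_lt (hSsub u hu)
  have hroot := key c le_rfl 0 (by simp)
  rw [hfS, hScard] at hroot
  have hlcL : l + c = L + 1 := by omega
  rw [hlcL] at hroot
  have hsum_eq : ∑ j ∈ Finset.range c, θ (l + j) = ∑ i ∈ Finset.Icc l L, θ i := by
    rw [← Finset.Ico_add_one_right_eq_Icc, Finset.sum_Ico_eq_sum_range]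
    have : L + 1 - l = c := hcl
    rw [this]
  rw [hsum_eq] at hroot
  have hpow : (2:ℕ) ^ (c + 1) ≤ 4 * k := by
    rcases Nat.eq_zero_or_pos c with h0 | hpos
    · rw [h0]; omega
    · have hk2 : 1 < k := by
        by_contra h
        have : k = 1 := by omega
        rw [this] at hc
        simp [Nat.clog_one_right] at hc
        omega
      have hlt : 2 ^ (c - 1) < k :=
        Nat.pow_pred_clog_lt_self (by norm_num) hk2
      have : 2 ^ (c + 1) = 4 * 2 ^ (c - 1) := by
        have : c + 1 = (c - 1) + 2 := by omega
        rw [this, pow_add]; ring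
      omega
  have hpowR : (2:ℝ) ^ (c + 1) ≤ 4 * k := by exact_mod_cast hpow
  have hX : (0:ℝ) ≤ ∑ i ∈ Finset.Icc l L, θ i :=
    Finset.sum_nonneg fun i _ => hθ i
  have hmul : (2:ℝ) ^ (c + 1) * (∑ i ∈ Finset.Icc l L, θ i)
      ≤ 4 * k * (∑ i ∈ Finset.Icc l L, θ i) :=
    mul_le_mul_of_nonneg_right hpowR hX
  have hsplit : (∑ i ∈ Finset.Icc 1 (l - 1), θ i) + (∑ i ∈ Finset.Icc l L, θ i)
      = ∑ i ∈ Finset.Icc 1 L, θ i := by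
    have e1 : Finset.Icc 1 (l - 1) = Finset.Ioc 0 (l - 1) := by
      rw [← Finset.Icc_add_one_left_eq_Ioc]; rfl
    have e2 : Finset.Icc l L = Finset.Ioc (l - 1) L := by
      rw [← Finset.Icc_add_one_left_eq_Ioc]
      congr 1
      omega
    have e3 : Finset.Icc 1 L = Finset.Ioc 0 L := by
      rw [← Finset.Icc_add_one_left_eq_Ioc]; rfl
    rw [e1, e2, e3]
    exact Finset.sum_Ioc_consecutive _ (by omega) (by omega)
  have hfin : 4 * (k:ℝ) * (∑ i ∈ Finset.Icc 1 (l - 1), θ i)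
      + 4 * (k:ℝ) * (∑ i ∈ Finset.Icc l L, θ i)
      = 4 * (k:ℝ) * (∑ i ∈ Finset.Icc 1 L, θ i) := by
    rw [← hsplit]; ring
  have hCk : (k:ℝ) * C = 4 * (k:ℝ) * (∑ i ∈ Finset.Icc 1 (l - 1), θ i) + k * γ := by
    have hCdef : C = 4 * (∑ i ∈ Finset.Icc 1 (l - 1), θ i) + γ := rfl
    rw [hCdef]; ring
  linarith [hroot, hmul, hfin, hCk]
end
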